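/- arXiv:math/0306189 — 2 statements merged into one kernel-verified Lean document; each statement's English description precedes it below -/
import Mathlib

section
/- Let $c > 0$ and let $h$ be a positive integer. Suppose $\mu$ is a Borel probability measure on $\mathbb{R}$ such that $\int x^k\,d\mu(x) = \frac{c^k}{(k+1)^{h/2}}$ for all integers $k\ge 0$. Then $\mu$ is absolutely continuous with density $\rho_{c,h}(x) = \frac{1}{c\,\Gamma(h/2)}\,\chi_{(0,c)}(x)\,(\log(c/x))^{h/2-1}$; i.e., $\mu = \rho_{c,h}(x)\,dx$. -/
/-!
The moments `c ^ k / (k + 1) ^ s` are at most `c ^ k`, so by Chebyshev's inequality `μ` is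
concentrated on `[-c, c]`. The substitution `x = c e^{-t}` turns the `k`-th moment of
`ρ_{c,s}(x) dx` into `c ^ k / Γ(s) ∫₀^∞ t^{s-1} e^{-(k+1)t} dt = c ^ k / (k + 1) ^ s`, so this
measure has the same moments and is concentrated on `[-c, c]` as well. Two finite measures on
a compact interval with the same moments integrate every polynomial, hence (Weierstrass) every
continuous function, alike, so they are equal.
-/

open MeasureTheory Real Set Filter

section Substitution

variable {E : Type*} [NormedAddCommGroup E] [NormedSpace ℝ E] {c : ℝ}

lemma image_mul_exp_neg_Ioi (hc : 0 < c) : (fun t => c * exp (-t)) '' Ioi 0 = Ioo 0 c := by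
  ext x
  constructor
  · rintro ⟨t, ht, rfl⟩
    have : exp (-t) < 1 := exp_lt_one_iff.2 (neg_lt_zero.2 ht)
    exact ⟨by positivity, by nlinarith [exp_pos (-t)]⟩
  · rintro ⟨hx0, hxc⟩
    refine ⟨log (c / x), log_pos ((one_lt_div hx0).2 hxc), ?_⟩
    simp only [exp_neg, exp_log (div_pos hc hx0)]
    field_simp

lemma hasDerivAt_mul_exp_neg (c t : ℝ) :
    HasDerivAt (fun t => c * exp (-t)) (c * (exp (-t) * -1)) t :=
  (hasDerivAt_neg t).exp.const_mul c

lemma injOn_mul_exp_neg (hc : 0 < c) : InjOn (fun t => c * exp (-t)) (Ioi 0) :=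
  fun _ _ _ _ h => neg_injective (exp_injective (mul_left_cancel₀ hc.ne' h))

theorem integral_Ioo_eq_integral_comp_mul_exp_neg (hc : 0 < c) (g : ℝ → E) :
    ∫ x in Ioo 0 c, g x = ∫ t in Ioi 0, (c * exp (-t)) • g (c * exp (-t)) := by
  rw [← image_mul_exp_neg_Ioi hc, integral_image_eq_integral_abs_deriv_smul measurableSet_Ioi
    (fun t _ => (hasDerivAt_mul_exp_neg c t).hasDerivWithinAt) (injOn_mul_exp_neg hc)]
  simp [abs_mul, abs_of_pos hc]

theorem integrableOn_Ioo_iff_integrableOn_comp_mul_exp_neg (hc : 0 < c) (g : ℝ → E) :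
    IntegrableOn g (Ioo 0 c) ↔
      IntegrableOn (fun t => (c * exp (-t)) • g (c * exp (-t))) (Ioi 0) := by
  rw [← image_mul_exp_neg_Ioi hc, integrableOn_image_iff_integrableOn_abs_deriv_smul
    measurableSet_Ioi (fun t _ => (hasDerivAt_mul_exp_neg c t).hasDerivWithinAt)
    (injOn_mul_exp_neg hc)]
  simp [abs_mul, abs_of_pos hc]

end Substitution

section LogPowerDensity

variable {c s : ℝ}

lemma mul_exp_neg_smul_pow_mul_log_rpow (hc : 0 < c) (k : ℕ) (t : ℝ) :
    (c * exp (-t)) • ((c * exp (-t)) ^ k * log (c / (c * exp (-t))) ^ (s - 1)) =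
      c ^ (k + 1) * (t ^ (s - 1) * exp (-((k + 1) * t))) := by
  have hexp : exp (-t) ^ (k + 1) = exp (-((k + 1) * t)) := by
    rw [← exp_nat_mul]; push_cast; ring_nf
  rw [div_mul_cancel_left₀ hc.ne', exp_neg, inv_inv, log_exp, smul_eq_mul, ← exp_neg, ← hexp]
  ring

lemma integrableOn_pow_mul_log_rpow (hc : 0 < c) (hs : 0 < s) (k : ℕ) :
    IntegrableOn (fun x => x ^ k * log (c / x) ^ (s - 1)) (Ioo 0 c) := by
  rw [integrableOn_Ioo_iff_integrableOn_comp_mul_exp_neg hc]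
  simp_rw [mul_exp_neg_smul_pow_mul_log_rpow hc]
  have := integrableOn_rpow_mul_exp_neg_mul_rpow (p := 1) (s := s - 1) (b := k + 1)
    (by linarith) one_pos (by positivity)
  simp only [rpow_one, neg_mul] at this
  exact this.const_mul _

lemma integral_pow_mul_log_rpow (hc : 0 < c) (hs : 0 < s) (k : ℕ) :
    ∫ x in Ioo 0 c, x ^ k * log (c / x) ^ (s - 1) = c ^ (k + 1) * Gamma s / (k + 1) ^ s := by
  rw [integral_Ioo_eq_integral_comp_mul_exp_neg hc]
  simp_rw [mul_exp_neg_smul_pow_mul_log_rpow hc]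
  rw [integral_const_mul, integral_rpow_mul_exp_neg_mul_Ioi hs (by positivity),
    div_rpow zero_le_one (by positivity), one_rpow]
  ring

/-- The density `ρ_{c,h}` of the statement, with `s = h / 2`. -/
noncomputable def logPowerDensity (c s : ℝ) : ℝ → ℝ :=
  indicator (Ioo 0 c) fun x => 1 / (c * Gamma s) * log (c / x) ^ (s - 1)

lemma measurable_logPowerDensity : Measurable (logPowerDensity c s) :=
  Measurable.indicator (by fun_prop) measurableSet_Ioo

lemma logPowerDensity_nonneg (hs : 0 < s) (x : ℝ) : 0 ≤ logPowerDensity c s x := by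
  refine indicator_nonneg (fun x hx => ?_) x
  have : 0 ≤ log (c / x) := log_nonneg ((one_le_div hx.1).2 hx.2.le)
  have := Gamma_pos_of_pos hs
  have := hx.1.trans hx.2
  positivity

lemma logPowerDensity_mul_pow (k : ℕ) (x : ℝ) :
    logPowerDensity c s x * x ^ k =
      indicator (Ioo 0 c) (fun x => 1 / (c * Gamma s) * (x ^ k * log (c / x) ^ (s - 1))) x := by
  by_cases hx : x ∈ Ioo 0 c <;> simp [logPowerDensity, hx, mul_comm, mul_left_comm]

lemma integrable_logPowerDensity_mul_pow (hc : 0 < c) (hs : 0 < s) (k : ℕ) :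
    Integrable fun x => logPowerDensity c s x * x ^ k := by
  simp_rw [logPowerDensity_mul_pow]
  exact IntegrableOn.integrable_indicator ((integrableOn_pow_mul_log_rpow hc hs k).const_mul _)
    measurableSet_Ioo

lemma integral_logPowerDensity_mul_pow (hc : 0 < c) (hs : 0 < s) (k : ℕ) :
    ∫ x, logPowerDensity c s x * x ^ k = c ^ k / (k + 1) ^ s := by
  simp_rw [logPowerDensity_mul_pow]
  rw [integral_indicator measurableSet_Ioo, integral_const_mul, integral_pow_mul_log_rpow hc hs,
    pow_succ]
  field_simp [(Gamma_pos_of_pos hs).ne']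

lemma isFiniteMeasure_withDensity_logPowerDensity (hc : 0 < c) (hs : 0 < s) :
    IsFiniteMeasure (volume.withDensity fun x => ENNReal.ofReal (logPowerDensity c s x)) := by
  have : Integrable (logPowerDensity c s) := by
    simpa using integrable_logPowerDensity_mul_pow hc hs 0
  exact isFiniteMeasure_withDensity_ofReal this.2

lemma integral_pow_withDensity_logPowerDensity (hc : 0 < c) (hs : 0 < s) (k : ℕ) :
    ∫ x, x ^ k ∂volume.withDensity (fun x => ENNReal.ofReal (logPowerDensity c s x)) =
      c ^ k / (k + 1) ^ s := by
  rw [integral_withDensity_eq_integral_toReal_smul measurable_logPowerDensity.ennreal_ofReal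
    (ae_of_all _ fun _ => ENNReal.ofReal_lt_top)]
  simp_rw [ENNReal.toReal_ofReal (logPowerDensity_nonneg hs _), smul_eq_mul]
  exact integral_logPowerDensity_mul_pow hc hs k

end LogPowerDensity

section CompactSupport

variable {μ : Measure ℝ} [IsFiniteMeasure μ] {c C : ℝ}

/-- Chebyshev: `t ^ (2k) μ{t ≤ |x|} ≤ C c ^ (2k)`, and `(c / t) ^ (2k) → 0`. -/
lemma measure_le_abs_eq_zero_of_integral_pow_le {t : ℝ} (hc : 0 ≤ c) (hct : c < t)
    (hint : ∀ k : ℕ, Integrable (fun x => x ^ (2 * k)) μ)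
    (hbound : ∀ k : ℕ, ∫ x, x ^ (2 * k) ∂μ ≤ C * c ^ (2 * k)) :
    μ {x | t ≤ |x|} = 0 := by
  have ht : 0 < t := hc.trans_lt hct
  have hle : ∀ k : ℕ, μ.real {x | t ≤ |x|} ≤ C * ((c / t) ^ 2) ^ k := fun k => by
    have hsub : {x | t ≤ |x|} ⊆ {x | t ^ (2 * k) ≤ x ^ (2 * k)} := fun x hx => by
      simpa [pow_mul, sq_abs] using pow_le_pow_left₀ ht.le hx (2 * k)
    have hcheb := mul_meas_ge_le_integral_of_nonneg
      (ae_of_all μ fun x => (even_two_mul k).pow_nonneg x) (hint k) (t ^ (2 * k))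
    rw [← pow_mul, div_pow, mul_div_assoc', le_div_iff₀ (by positivity), mul_comm]
    exact ((mul_le_mul_of_nonneg_left (measureReal_mono hsub) (by positivity)).trans hcheb).trans
      (hbound k)
  have hlim : Tendsto (fun k : ℕ => C * ((c / t) ^ 2) ^ k) atTop (nhds 0) := by
    simpa using (tendsto_pow_atTop_nhds_zero_of_lt_one (by positivity)
      (pow_lt_one₀ (by positivity) ((div_lt_one ht).2 hct) two_ne_zero)).const_mul C
  exact (measureReal_eq_zero_iff).1 (le_antisymm (ge_of_tendsto' hlim hle) measureReal_nonneg)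

theorem ae_abs_le_of_integral_pow_le (hc : 0 ≤ c)
    (hint : ∀ k : ℕ, Integrable (fun x => x ^ (2 * k)) μ)
    (hbound : ∀ k : ℕ, ∫ x, x ^ (2 * k) ∂μ ≤ C * c ^ (2 * k)) :
    ∀ᵐ x ∂μ, |x| ≤ c := by
  have hlt : ∀ n : ℕ, ∀ᵐ x ∂μ, |x| < c + 1 / (n + 1) := fun n => by
    rw [ae_iff]
    simpa only [not_lt] using measure_le_abs_eq_zero_of_integral_pow_le hc
      (lt_add_of_pos_right c Nat.one_div_pos_of_nat) hint hbound
  filter_upwards [ae_all_iff.2 hlt] with x hx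
  have hlim : Tendsto (fun n : ℕ => c + 1 / (n + 1)) atTop (nhds c) := by
    simpa using tendsto_one_div_add_atTop_nhds_zero_nat.const_add c
  exact ge_of_tendsto' hlim fun n => (hx n).le

end CompactSupport

section MomentDeterminacy

variable {μ ν : Measure ℝ} [IsFiniteMeasure μ] [IsFiniteMeasure ν] {a b : ℝ}

lemma integrable_of_continuous_of_ae_mem_Icc (hμ : ∀ᵐ x ∂μ, x ∈ Icc a b) {f : ℝ → ℝ}
    (hf : Continuous f) : Integrable f μ := by
  rw [← Measure.restrict_eq_self_of_ae_mem hμ]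
  exact hf.continuousOn.integrableOn_compact isCompact_Icc

lemma integral_eval_eq_of_integral_pow_eq (hμ : ∀ᵐ x ∂μ, x ∈ Icc a b)
    (hν : ∀ᵐ x ∂ν, x ∈ Icc a b) (hmom : ∀ k : ℕ, ∫ x, x ^ k ∂μ = ∫ x, x ^ k ∂ν)
    (p : Polynomial ℝ) : ∫ x, p.eval x ∂μ = ∫ x, p.eval x ∂ν := by
  simp_rw [Polynomial.eval_eq_sum_range]
  rw [integral_finsetSum _ fun i _ => integrable_of_continuous_of_ae_mem_Icc hμ (by fun_prop),
    integral_finsetSum _ fun i _ => integrable_of_continuous_of_ae_mem_Icc hν (by fun_prop)]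
  simp_rw [integral_const_mul, hmom]

lemma abs_integral_sub_integral_le (hμ : ∀ᵐ x ∂μ, x ∈ Icc a b) {f g : ℝ → ℝ}
    (hf : Continuous f) (hg : Continuous g) {ε : ℝ} (hfg : ∀ x ∈ Icc a b, |f x - g x| < ε) :
    |∫ x, f x ∂μ - ∫ x, g x ∂μ| ≤ ε * μ.real univ := by
  rw [← integral_sub (integrable_of_continuous_of_ae_mem_Icc hμ hf)
    (integrable_of_continuous_of_ae_mem_Icc hμ hg), ← norm_eq_abs]
  refine norm_integral_le_of_norm_le_const ?_
  filter_upwards [hμ] with x hx using (hfg x hx).le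

/-- Weierstrass approximation: polynomials are dense in `C([a, b])`. -/
theorem Measure.ext_of_integral_pow_eq_of_ae_mem_Icc (hμ : ∀ᵐ x ∂μ, x ∈ Icc a b)
    (hν : ∀ᵐ x ∂ν, x ∈ Icc a b) (hmom : ∀ k : ℕ, ∫ x, x ^ k ∂μ = ∫ x, x ^ k ∂ν) : μ = ν := by
  refine ext_of_forall_integral_eq_of_IsFiniteMeasure fun f => eq_of_forall_dist_le fun ε hε => ?_
  set M := μ.real univ + ν.real univ + 1
  have hM : 0 < M := by positivity
  obtain ⟨p, hp⟩ := exists_polynomial_near_of_continuousOn a b f f.continuous.continuousOn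
    (ε / M) (div_pos hε hM)
  have hfp : ∀ x ∈ Icc a b, |f x - p.eval x| < ε / M := fun x hx => by
    rw [abs_sub_comm]; exact hp x hx
  have hμp := abs_integral_sub_integral_le hμ f.continuous p.continuous hfp
  have hνp := abs_integral_sub_integral_le hν f.continuous p.continuous hfp
  rw [integral_eval_eq_of_integral_pow_eq hμ hν hmom p] at hμp
  calc dist (∫ x, f x ∂μ) (∫ x, f x ∂ν)
      ≤ ε / M * μ.real univ + ε / M * ν.real univ := by
        rw [dist_eq_norm, norm_eq_abs]
        exact (abs_sub_le _ _ _).trans (add_le_add hμp (abs_sub_comm (α := ℝ) _ _ ▸ hνp))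
    _ ≤ ε := by
        rw [← mul_add, div_mul_eq_mul_div, div_le_iff₀ hM]
        nlinarith

end MomentDeterminacy

lemma ae_mem_Icc_of_integral_pow_eq {μ : Measure ℝ} [IsFiniteMeasure μ] {c s : ℝ} (hc : 0 < c)
    (hs : 0 ≤ s) (hmom : ∀ k : ℕ, ∫ x, x ^ k ∂μ = c ^ k / (k + 1) ^ s) :
    ∀ᵐ x ∂μ, x ∈ Icc (-c) c := by
  have hint : ∀ k : ℕ, Integrable (fun x => x ^ k) μ := fun k => by
    by_contra hk
    have : 0 < ∫ x, x ^ k ∂μ := hmom k ▸ by positivity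
    exact this.ne' (integral_undef hk)
  have hbound : ∀ k : ℕ, ∫ x, x ^ (2 * k) ∂μ ≤ 1 * c ^ (2 * k) := fun k => by
    rw [hmom, one_mul]
    exact div_le_self (by positivity) (one_le_rpow (by simp) hs)
  filter_upwards [ae_abs_le_of_integral_pow_le hc.le (fun k => hint _) hbound] with x hx
  exact abs_le.1 hx

/-- Moment determinacy: a Borel probability measure on `ℝ` whose `k`-th moments are
`c^k/(k+1)^{h/2}` must be the measure with density
`ρ_{c,h}(x) = (1/(c Γ(h/2))) χ_{(0,c)}(x) (log (c/x))^{h/2-1}`. -/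
theorem moment_lemma
    (c : ℝ) (hc : 0 < c) (h : ℕ) (hh : 0 < h)
    (μ : Measure ℝ) [IsProbabilityMeasure μ]
    (hmom : ∀ k : ℕ, ∫ x, x ^ k ∂μ = c ^ k / ((k + 1 : ℝ) ^ ((h : ℝ) / 2))) :
    μ = volume.withDensity fun x => ENNReal.ofReal
      (Set.indicator (Set.Ioo 0 c)
        (fun x => (1 / (c * Real.Gamma ((h : ℝ) / 2))) *
          Real.log (c / x) ^ ((h : ℝ) / 2 - 1)) x) := by
  show μ = volume.withDensity fun x => ENNReal.ofReal (logPowerDensity c ((h : ℝ) / 2) x)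
  have hs : 0 < (h : ℝ) / 2 := by positivity
  have := isFiniteMeasure_withDensity_logPowerDensity hc hs
  have hρmom := integral_pow_withDensity_logPowerDensity hc hs
  exact Measure.ext_of_integral_pow_eq_of_ae_mem_Icc (ae_mem_Icc_of_integral_pow_eq hc hs.le hmom)
    (ae_mem_Icc_of_integral_pow_eq hc hs.le hρmom) fun k => (hmom k).trans (hρmom k).symm
end

section
/- (Generating-function identity.) For every complex number $w$ and positive integer $h$, $\sum_{k\ge 0}\frac{w^k}{k!\,(k+1)^{h/2}} = \frac{1}{\Gamma(h/2)}\int_0^\infty e^{we^{-t}}e^{-t}\,t^{h/2-1}\,dt$. -/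
open MeasureTheory Real

lemma aux_integrable {s : ℝ} (hs : 0 < s) {r : ℝ} (hr : 1 ≤ r) :
    IntegrableOn (fun t : ℝ => t ^ (s - 1) * Real.exp (-(r * t))) (Set.Ioi 0) := by
  have h0 := Real.GammaIntegral_convergent hs
  refine Integrable.mono' (h0.congr_fun (fun t ht => mul_comm _ _) measurableSet_Ioi) ?_ ?_
  · exact (Measurable.aestronglyMeasurable (by fun_prop))
  · filter_upwards [ae_restrict_mem measurableSet_Ioi] with t ht
    rw [Real.norm_eq_abs, abs_mul, abs_of_nonneg (Real.rpow_nonneg (le_of_lt ht) _),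
      abs_of_nonneg (Real.exp_pos _).le]
    gcongr
    · exact Real.rpow_nonneg (le_of_lt ht) _
    · nlinarith [Set.mem_Ioi.mp ht]

/-- Generating-function identity: for every `w ∈ ℂ` and positive integer `h`,
`∑_{k≥0} w^k/(k! (k+1)^{h/2}) = (1/Γ(h/2)) ∫₀^∞ e^{w e^{-t}} e^{-t} t^{h/2-1} dt`. -/
theorem generating_function_identity
    (w : ℂ) (h : ℕ) (hh : 0 < h) :
    ∑' k : ℕ, w ^ k / ((k.factorial : ℂ) * ((k + 1 : ℝ) ^ ((h : ℝ) / 2) : ℝ))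
      = (1 / (Real.Gamma ((h : ℝ) / 2) : ℂ)) *
        ∫ t in Set.Ioi (0 : ℝ),
          Complex.exp (w * Real.exp (-t)) * Real.exp (-t) *
            ((t ^ ((h : ℝ) / 2 - 1) : ℝ) : ℂ) := by
  set s : ℝ := (h : ℝ) / 2 with hs_def
  have hs : 0 < s := by
    have : (0 : ℝ) < h := by exact_mod_cast hh
    positivity
  have hΓ : 0 < Real.Gamma s := Real.Gamma_pos_of_pos hs
  set F : ℕ → ℝ → ℂ := fun k t =>
    (w ^ k / (k.factorial : ℂ)) *
      ((t ^ (s - 1) * Real.exp (-((k + 1 : ℝ) * t)) : ℝ) : ℂ) with hF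
  have hr1 : ∀ k : ℕ, (1 : ℝ) ≤ (k + 1 : ℝ) := by
    intro k; linarith [Nat.cast_nonneg (α := ℝ) k]
  have hr0 : ∀ k : ℕ, (0 : ℝ) < (k + 1 : ℝ) := fun k => lt_of_lt_of_le one_pos (hr1 k)
  -- integrability of each term
  have hint : ∀ k : ℕ, Integrable (F k) (volume.restrict (Set.Ioi (0 : ℝ))) := by
    intro k
    exact ((aux_integrable hs (hr1 k)).ofReal.const_mul _)
  -- value of each integral
  have hval : ∀ k : ℕ, ∫ t in Set.Ioi (0 : ℝ), F k t
      = (w ^ k / (k.factorial : ℂ)) * (((1 / (k + 1 : ℝ)) ^ s * Real.Gamma s : ℝ) : ℂ) := by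
    intro k
    rw [hF]
    simp only []
    rw [MeasureTheory.integral_const_mul]
    congr 1
    have hco : ∫ a in Set.Ioi (0 : ℝ),
        ((a ^ (s - 1) * Real.exp (-((k + 1 : ℝ) * a)) : ℝ) : ℂ)
        = ((∫ a in Set.Ioi (0 : ℝ), a ^ (s - 1) * Real.exp (-((k + 1 : ℝ) * a)) : ℝ) : ℂ) :=
      integral_ofReal
    rw [hco, Real.integral_rpow_mul_exp_neg_mul_Ioi hs (hr0 k)]
  -- norm integrals
  have hnorm : ∀ k : ℕ, ∫ t in Set.Ioi (0 : ℝ), ‖F k t‖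
      = (‖w‖ ^ k / (k.factorial : ℝ)) * ((1 / (k + 1 : ℝ)) ^ s * Real.Gamma s) := by
    intro k
    have : ∀ t ∈ Set.Ioi (0 : ℝ), ‖F k t‖
        = (‖w‖ ^ k / (k.factorial : ℝ)) * (t ^ (s - 1) * Real.exp (-((k + 1 : ℝ) * t))) := by
      intro t ht
      rw [hF]
      simp only [norm_mul, norm_div, norm_pow, Complex.norm_real, Complex.norm_natCast]
      simp only [Real.norm_eq_abs]
      rw [abs_of_nonneg (Real.rpow_nonneg (le_of_lt ht) _),
        abs_of_nonneg (Real.exp_pos _).le]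
    rw [setIntegral_congr_fun measurableSet_Ioi this, MeasureTheory.integral_const_mul,
      Real.integral_rpow_mul_exp_neg_mul_Ioi hs (hr0 k)]
  have hsum : Summable fun k : ℕ => ∫ t in Set.Ioi (0 : ℝ), ‖F k t‖ := by
    refine Summable.of_nonneg_of_le
      (f := fun k : ℕ => (‖w‖ ^ k / (k.factorial : ℝ)) * Real.Gamma s)
      (fun k => integral_nonneg (fun t => norm_nonneg _))
      (fun k => ?_) ((Real.summable_pow_div_factorial ‖w‖).mul_right _)
    · rw [hnorm k]
      have h1 : (1 / (k + 1 : ℝ)) ^ s ≤ 1 := by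
        apply Real.rpow_le_one (by positivity) _ hs.le
        rw [div_le_one (hr0 k)]; exact hr1 k
      have h2 : (0 : ℝ) ≤ ‖w‖ ^ k / (k.factorial : ℝ) := by positivity
      calc (‖w‖ ^ k / (k.factorial : ℝ)) * ((1 / (k + 1 : ℝ)) ^ s * Real.Gamma s)
          ≤ (‖w‖ ^ k / (k.factorial : ℝ)) * (1 * Real.Gamma s) := by
            gcongr
        _ = (‖w‖ ^ k / (k.factorial : ℝ)) * Real.Gamma s := by ring
  -- interchange sum and integral
  have hswap := MeasureTheory.integral_tsum_of_summable_integral_norm hint hsum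
  -- pointwise sum
  have hpt : ∀ t : ℝ, (∑' k : ℕ, F k t)
      = Complex.exp (w * Real.exp (-t)) * Real.exp (-t) * ((t ^ (s - 1) : ℝ) : ℂ) := by
    intro t
    have hexp : ∀ k : ℕ, ((Real.exp (-((k + 1 : ℝ) * t)) : ℝ) : ℂ)
        = (Real.exp (-t) : ℂ) ^ k * (Real.exp (-t) : ℂ) := by
      intro k
      rw [← Complex.ofReal_pow, ← Complex.ofReal_mul, ← Real.exp_nat_mul, ← Real.exp_add]
      ring_nf
    have h1 : ∀ k : ℕ, F k t
        = ((w * Real.exp (-t)) ^ k / (k.factorial : ℂ)) *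
          ((Real.exp (-t) : ℂ) * ((t ^ (s - 1) : ℝ) : ℂ)) := by
      intro k
      rw [hF]
      simp only [Complex.ofReal_mul]
      rw [hexp k, mul_pow]
      ring
    have hexp2 : Complex.exp (w * (Real.exp (-t) : ℂ))
        = ∑' k : ℕ, (w * (Real.exp (-t) : ℂ)) ^ k / (k.factorial : ℂ) := by
      rw [Complex.exp_eq_exp_ℂ, NormedSpace.exp_eq_tsum_div]
    rw [tsum_congr h1, tsum_mul_right, ← hexp2]
    ring
  rw [funext hpt] at hswap
  rw [← hswap, ← tsum_mul_left]
  apply tsum_congr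
  intro k
  have hq : ((1 / (k + 1 : ℝ)) ^ s : ℝ) = ((k + 1 : ℝ) ^ s)⁻¹ := by
    rw [one_div, Real.inv_rpow (hr0 k).le]
  rw [hval k, hq]
  have hG : ((Real.Gamma s : ℝ) : ℂ) ≠ 0 := by exact_mod_cast hΓ.ne'
  have hk1 : (((k + 1 : ℝ) ^ s : ℝ) : ℂ) ≠ 0 := by
    exact_mod_cast (Real.rpow_pos_of_pos (hr0 k) s).ne'
  have hfac : ((k.factorial : ℕ) : ℂ) ≠ 0 := Nat.cast_ne_zero.mpr k.factorial_ne_zero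
  push_cast
  field_simp
end
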